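/- Let p_k^♯ denote the k-th primorial. For every even integer d with 2 ≤ d < p_{k+1}^♯, the prime-pair singular series satisfies 𝔖(d) ≤ 𝔖(p_k^♯), with equality exactly when d = m·p_k^♯ for some integer m with 1 ≤ m < p_{k+1} having no prime factor exceeding p_k. -/

import Mathlib

open Finset

/-- The twin prime constant `C₂ = ∏_{p > 2} (1 - 1/(p-1)²)`. -/
noncomputable def twinC : ℝ :=
  ∏' p : Nat.Primes, if 2 < (p : ℕ) then (1 - 1 / (((p : ℕ) : ℝ) - 1) ^ 2) else 1

/-- The prime-pair singular series `𝔖(d) = 2C₂ ∏_{p ∣ d, p > 2} (p-1)/(p-2)` for even `d`. -/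
noncomputable def S2 (d : ℕ) : ℝ :=
  2 * twinC * ∏ p ∈ d.primeFactors.filter (fun p => 2 < p), (((p : ℝ) - 1) / ((p : ℝ) - 2))

/-- The `k`-th primorial, the product of the first `k` primes. -/
noncomputable def primorialK (k : ℕ) : ℕ := ∏ i ∈ Finset.range k, Nat.nth Nat.Prime i

/-
Write 𝔖(d) = 2C₂ ∏_{p ∣ d, p > 2} f(p) with f(p) = (p-1)/(p-2), which decreases strictly to 1.
Let s be the odd prime factors of d and T the odd primes below q = p_{k+1}. From
2 ∏ s ≤ d < p_{k+1}^♯ = 2q ∏ T one gets q^#(s \ T) ≤ ∏ (s \ T) < q ∏ (T \ s) ≤ q^(#(T \ s) + 1),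
so s has no more primes outside T than T has outside s. Each prime of s \ T is ≥ q and each
prime of T \ s is < q, so ∏_{s \ T} f ≤ f(q)^#(s \ T) ≤ f(q)^#(T \ s) ≤ ∏_{T \ s} f, strictly
unless s = T. Equality thus forces d and p_k^♯ to have the same prime factors, and p_k^♯ being
squarefree this means d = m p_k^♯ with m built from the primes ≤ p_k. Finally C₂ > 0 because
∏_{2 ≤ n ≤ N} (1 - 1/n²) telescopes to (N+1)/(2N) ≥ 1/2.
-/

namespace S2Proof

lemma card_le_card_of_prod_lt_mul_prod {ι : Type*} {A B : Finset ι} {g : ι → ℕ} {q : ℕ}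
    (hq : 1 < q) (hA : ∀ a ∈ A, q ≤ g a) (hB : ∀ b ∈ B, g b ≤ q)
    (h : ∏ a ∈ A, g a < q * ∏ b ∈ B, g b) : #A ≤ #B := by
  have : q ^ #A < q ^ (#B + 1) :=
    calc q ^ #A ≤ ∏ a ∈ A, g a := pow_card_le_prod A g q hA
      _ < q * ∏ b ∈ B, g b := h
      _ ≤ q * q ^ #B := Nat.mul_le_mul_left q (prod_le_pow_card B g q hB)
      _ = q ^ (#B + 1) := (pow_succ' q #B).symm
  exact Nat.lt_succ_iff.1 ((Nat.pow_lt_pow_iff_right hq).1 this)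

lemma prod_le_prod_of_le_lt_of_card_le {R ι : Type*} [CommSemiring R] [LinearOrder R]
    [IsStrictOrderedRing R] {A B : Finset ι} {g : ι → R} {c : R}
    (hc : 1 ≤ c) (hA : ∀ a ∈ A, 0 ≤ g a ∧ g a ≤ c) (hB : ∀ b ∈ B, c < g b) (hAB : #A ≤ #B) :
    ∏ a ∈ A, g a ≤ ∏ b ∈ B, g b ∧ (B.Nonempty → ∏ a ∈ A, g a < ∏ b ∈ B, g b) := by
  have hc0 : 0 < c := zero_lt_one.trans_le hc
  have hAc : ∏ a ∈ A, g a ≤ c ^ #B :=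
    calc ∏ a ∈ A, g a ≤ ∏ _a ∈ A, c :=
          prod_le_prod (fun a ha => (hA a ha).1) (fun a ha => (hA a ha).2)
      _ = c ^ #A := prod_const c
      _ ≤ c ^ #B := pow_le_pow_right₀ hc hAB
  have hcB : ∀ hB' : B.Nonempty, c ^ #B < ∏ b ∈ B, g b := fun hB' =>
    (prod_const c).symm.trans_lt (prod_lt_prod_of_nonempty (fun _ _ => hc0) hB hB')
  refine ⟨?_, fun hB' => hAc.trans_lt (hcB hB')⟩
  rcases B.eq_empty_or_nonempty with rfl | hB'
  · simpa using hAc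
  · exact hAc.trans (hcB hB').le

noncomputable def twinFactor (n : ℕ) : ℝ := if 2 < n then 1 - 1 / ((n : ℝ) - 1) ^ 2 else 1

lemma twinFactor_nonneg (n : ℕ) : 0 ≤ twinFactor n := by
  unfold twinFactor
  split_ifs with h
  · have : (2 : ℝ) ≤ (n : ℝ) - 1 := by
      have : (3 : ℝ) ≤ n := by exact_mod_cast h
      linarith
    rw [sub_nonneg, div_le_one (by positivity)]
    nlinarith
  · exact zero_le_one

lemma twinFactor_le_one (n : ℕ) : twinFactor n ≤ 1 := by
  unfold twinFactor
  split_ifs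
  · exact sub_le_self _ (by positivity)
  · exact le_rfl

lemma prod_range_twinFactor (N : ℕ) :
    ∏ n ∈ range (N + 3), twinFactor n = (N + 2) / (2 * (N + 1)) := by
  induction N with
  | zero => simp [prod_range_succ, twinFactor]
  | succ N ih =>
    have hcast : ((N + 1 + 2 : ℕ) : ℝ) - 1 = N + 2 := by push_cast; ring
    rw [prod_range_succ, ih, twinFactor, if_pos (by omega), hcast]
    push_cast
    field_simp
    ring

lemma half_le_prod_twinFactor (t : Finset ℕ) : 1 / 2 ≤ ∏ n ∈ t, twinFactor n := by
  set N := t.sup id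
  have ht : t ⊆ range (N + 3) := fun n hn => mem_range.2 (by
    have : n ≤ N := le_sup (f := id) hn
    omega)
  calc (1 / 2 : ℝ) ≤ (N + 2) / (2 * (N + 1)) := by
        rw [div_le_div_iff₀ (by norm_num) (by positivity)]
        linarith
    _ = ∏ n ∈ range (N + 3), twinFactor n := (prod_range_twinFactor N).symm
    _ ≤ ∏ n ∈ t, twinFactor n :=
        prod_le_prod_of_subset_of_le_one ht (fun n _ => twinFactor_nonneg n)
          (fun n _ _ => twinFactor_le_one n)

lemma twinC_pos : 0 < twinC := by
  change 0 < ∏' p : Nat.Primes, twinFactor p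
  by_cases h : Multipliable fun p : Nat.Primes => twinFactor p
  · have hbound : ∀ s : Finset Nat.Primes, 1 / 2 ≤ ∏ p ∈ s, twinFactor p := fun s =>
      (half_le_prod_twinFactor (s.map (.subtype _))).trans_eq (Finset.prod_map _ _ _)
    linarith [ge_of_tendsto' h.hasProd hbound]
  · rw [tprod_eq_one_of_not_multipliable h]
    exact one_pos

noncomputable def singularFactor (p : ℕ) : ℝ := ((p : ℝ) - 1) / ((p : ℝ) - 2)

def oddPrimeFactors (n : ℕ) : Finset ℕ := n.primeFactors.filter (fun p => 2 < p)

lemma S2_eq_prod_singularFactor (d : ℕ) :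
    S2 d = 2 * twinC * ∏ p ∈ oddPrimeFactors d, singularFactor p := rfl

lemma one_lt_singularFactor {p : ℕ} (hp : 3 ≤ p) : 1 < singularFactor p := by
  have : (3 : ℝ) ≤ p := by exact_mod_cast hp
  rw [singularFactor, lt_div_iff₀ (by linarith)]
  linarith

lemma singularFactor_strictAntiOn : StrictAntiOn singularFactor {p | 3 ≤ p} := by
  intro p hp q _ hpq
  have hp' : (3 : ℝ) ≤ p := by exact_mod_cast hp
  have hpq' : (p : ℝ) < q := by exact_mod_cast hpq
  rw [singularFactor, singularFactor, div_lt_div_iff₀ (by linarith) (by linarith)]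
  nlinarith

lemma prod_singularFactor_le_of_prod_lt {s T : Finset ℕ} {q : ℕ} (hq : 3 ≤ q)
    (hs : ∀ p ∈ s, p ∉ T → q ≤ p) (hT : ∀ p ∈ T, 3 ≤ p ∧ p < q)
    (hprod : ∏ p ∈ s, p < q * ∏ p ∈ T, p) :
    ∏ p ∈ s, singularFactor p ≤ ∏ p ∈ T, singularFactor p ∧
      (∏ p ∈ s, singularFactor p = ∏ p ∈ T, singularFactor p → s = T) := by
  have hsplit_s {M : Type} [CommMonoid M] (g : ℕ → M) :
      (∏ p ∈ s ∩ T, g p) * ∏ p ∈ s \ T, g p = ∏ p ∈ s, g p :=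
    prod_inter_mul_prod_sdiff s T g
  have hsplit_T {M : Type} [CommMonoid M] (g : ℕ → M) :
      (∏ p ∈ s ∩ T, g p) * ∏ p ∈ T \ s, g p = ∏ p ∈ T, g p := by
    rw [inter_comm]
    exact prod_inter_mul_prod_sdiff T s g
  have hcommon : ∀ p ∈ s ∩ T, 3 ≤ p := fun p hp => (hT p (mem_inter.1 hp).2).1
  have hA : ∀ p ∈ s \ T, q ≤ p := fun p hp => hs p (mem_sdiff.1 hp).1 (mem_sdiff.1 hp).2
  have hB : ∀ p ∈ T \ s, 3 ≤ p ∧ p < q := fun p hp => hT p (mem_sdiff.1 hp).1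
  have hcard : #(s \ T) ≤ #(T \ s) := by
    have h : (∏ p ∈ s ∩ T, p) * ∏ p ∈ s \ T, p < (∏ p ∈ s ∩ T, p) * (q * ∏ p ∈ T \ s, p) := by
      rw [mul_left_comm, hsplit_s fun p => p, hsplit_T fun p => p]
      exact hprod
    exact card_le_card_of_prod_lt_mul_prod (g := fun p => p) (by omega) hA
      (fun p hp => (hB p hp).2.le) (Nat.lt_of_mul_lt_mul_left h)
  obtain ⟨hle, hlt⟩ := prod_le_prod_of_le_lt_of_card_le (one_lt_singularFactor hq).le
    (fun p hp => ⟨(zero_lt_one.trans (one_lt_singularFactor (hq.trans (hA p hp)))).le,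
      singularFactor_strictAntiOn.antitoneOn hq (hq.trans (hA p hp)) (hA p hp)⟩)
    (fun p hp => singularFactor_strictAntiOn (hB p hp).1 hq (hB p hp).2) hcard
  have hpos : 0 < ∏ p ∈ s ∩ T, singularFactor p :=
    prod_pos fun p hp => zero_lt_one.trans (one_lt_singularFactor (hcommon p hp))
  rw [← hsplit_s, ← hsplit_T, mul_le_mul_iff_right₀ hpos, mul_right_inj' hpos.ne']
  refine ⟨hle, fun heq => ?_⟩
  have hTs : T \ s = ∅ := not_nonempty_iff_eq_empty.1 fun hne => (hlt hne).ne heq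
  have hsT : s \ T = ∅ := by simpa [hTs] using hcard
  exact (sdiff_eq_empty_iff_subset.1 hsT).antisymm (sdiff_eq_empty_iff_subset.1 hTs)

lemma primorialK_eq_prod_image (k : ℕ) :
    primorialK k = ∏ p ∈ (range k).image (Nat.nth Nat.Prime), p :=
  (prod_image (f := fun p => p) fun _ _ _ _ h =>
    Nat.nth_injective Nat.infinite_setOfPred_prime h).symm

lemma prime_of_mem_image_nth_prime {s : Finset ℕ} {p : ℕ}
    (hp : p ∈ s.image (Nat.nth Nat.Prime)) : p.Prime := by
  obtain ⟨i, -, rfl⟩ := mem_image.1 hp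
  exact Nat.prime_nth_prime i

lemma primeFactors_primorialK (k : ℕ) :
    (primorialK k).primeFactors = (range k).image (Nat.nth Nat.Prime) := by
  rw [primorialK_eq_prod_image]
  exact Nat.primeFactors_prod fun p => prime_of_mem_image_nth_prime

lemma mem_primeFactors_primorialK {k p : ℕ} :
    p ∈ (primorialK k).primeFactors ↔ p.Prime ∧ p < Nat.nth Nat.Prime k := by
  rw [primeFactors_primorialK, mem_image]
  constructor
  · rintro ⟨i, hi, rfl⟩
    exact ⟨Nat.prime_nth_prime i,
      (Nat.nth_lt_nth Nat.infinite_setOfPred_prime).2 (mem_range.1 hi)⟩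
  · rintro ⟨hp, hpk⟩
    refine ⟨Nat.count Nat.Prime p, mem_range.2 ?_, Nat.nth_count hp⟩
    rwa [← Nat.nth_lt_nth Nat.infinite_setOfPred_prime, Nat.nth_count hp]

lemma squarefree_primorialK (k : ℕ) : Squarefree (primorialK k) := by
  rw [primorialK_eq_prod_image]
  refine Finset.squarefree_prod_of_pairwise_isCoprime (fun p hp q hq hpq => ?_)
    fun p hp => (prime_of_mem_image_nth_prime hp).squarefree
  rw [Function.onFun, ← Nat.coprime_iff_isRelPrime]
  exact (Nat.coprime_primes (prime_of_mem_image_nth_prime hp)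
    (prime_of_mem_image_nth_prime hq)).2 hpq

lemma lt_nth_prime_iff_le_nth_prime_pred {p k : ℕ} (hp : p.Prime) (hk : 1 ≤ k) :
    p < Nat.nth Nat.Prime k ↔ p ≤ Nat.nth Nat.Prime (k - 1) := by
  rw [← Nat.nth_count hp, Nat.nth_lt_nth Nat.infinite_setOfPred_prime,
    Nat.nth_le_nth Nat.infinite_setOfPred_prime]
  omega

lemma primeFactors_eq_insert_two {n : ℕ} (hn : Even n) (hn0 : n ≠ 0) :
    n.primeFactors = insert 2 (oddPrimeFactors n) := by
  have h2 : 2 ∈ n.primeFactors := Nat.mem_primeFactors.2 ⟨Nat.prime_two, hn.two_dvd, hn0⟩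
  ext p
  rw [mem_insert, oddPrimeFactors, mem_filter]
  constructor
  · intro hp
    rcases (Nat.prime_of_mem_primeFactors hp).two_le.eq_or_lt with h | h
    exacts [Or.inl h.symm, Or.inr ⟨hp, h⟩]
  · rintro (rfl | ⟨hp, -⟩)
    exacts [h2, hp]

lemma two_notMem_oddPrimeFactors (n : ℕ) : 2 ∉ oddPrimeFactors n := by
  simp [oddPrimeFactors]

lemma primeFactors_eq_iff_exists_mul {d P : ℕ} (hP : Squarefree P) (hd : d ≠ 0) :
    d.primeFactors = P.primeFactors ↔ ∃ m ≠ 0, d = m * P ∧ m.primeFactors ⊆ P.primeFactors := by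
  constructor
  · intro h
    obtain ⟨m, rfl⟩ : P ∣ d := by
      rw [← Nat.prod_primeFactors_of_squarefree hP, Nat.prod_primeFactors_dvd_iff hd, h]
    refine ⟨m, right_ne_zero_of_mul hd, mul_comm P m, ?_⟩
    rw [← h]
    exact Nat.primeFactors_mono (dvd_mul_left m P) hd
  · rintro ⟨m, hm, rfl, hmP⟩
    rw [Nat.primeFactors_mul hm hP.ne_zero, union_eq_right.2 hmP]

lemma primorialK_succ (k : ℕ) : primorialK (k + 1) = primorialK k * Nat.nth Nat.Prime k :=
  prod_range_succ _ k

lemma primorialK_ne_zero (k : ℕ) : primorialK k ≠ 0 :=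
  (squarefree_primorialK k).ne_zero

lemma even_primorialK {k : ℕ} (hk : 1 ≤ k) : Even (primorialK k) := by
  refine even_iff_two_dvd.2
    (Nat.dvd_of_mem_primeFactors (mem_primeFactors_primorialK.2 ⟨Nat.prime_two, ?_⟩))
  rw [← Nat.nth_prime_zero_eq_two]
  exact (Nat.nth_lt_nth Nat.infinite_setOfPred_prime).2 hk

lemma oddPrimeFactors_eq_iff {m n : ℕ} (hm : Even m) (hm0 : m ≠ 0) (hn : Even n) (hn0 : n ≠ 0) :
    oddPrimeFactors m = oddPrimeFactors n ↔ m.primeFactors = n.primeFactors := by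
  rw [primeFactors_eq_insert_two hm hm0, primeFactors_eq_insert_two hn hn0]
  refine ⟨congrArg _, fun h => ?_⟩
  rw [← erase_insert (two_notMem_oddPrimeFactors m), h,
    erase_insert (two_notMem_oddPrimeFactors n)]

section

variable {k d : ℕ}

lemma prod_oddPrimeFactors_lt (hk : 1 ≤ k) (he : Even d) (hd0 : d ≠ 0)
    (hlt : d < primorialK (k + 1)) :
    ∏ p ∈ oddPrimeFactors d, p <
      Nat.nth Nat.Prime k * ∏ p ∈ oddPrimeFactors (primorialK k), p := by
  have hd : 2 * ∏ p ∈ oddPrimeFactors d, p ≤ d := by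
    rw [← prod_insert (f := fun p => p) (two_notMem_oddPrimeFactors d),
      ← primeFactors_eq_insert_two he hd0]
    exact Nat.le_of_dvd (Nat.pos_of_ne_zero hd0) (Nat.prod_primeFactors_dvd d)
  have hP : 2 * ∏ p ∈ oddPrimeFactors (primorialK k), p = primorialK k := by
    rw [← prod_insert (f := fun p => p) (two_notMem_oddPrimeFactors _),
      ← primeFactors_eq_insert_two (even_primorialK hk) (primorialK_ne_zero k),
      Nat.prod_primeFactors_of_squarefree (squarefree_primorialK k)]
  rw [primorialK_succ, ← hP] at hlt
  nlinarith

lemma prod_singularFactor_le_primorialK (hk : 1 ≤ k) (he : Even d) (hd0 : d ≠ 0)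
    (hlt : d < primorialK (k + 1)) :
    ∏ p ∈ oddPrimeFactors d, singularFactor p
        ≤ ∏ p ∈ oddPrimeFactors (primorialK k), singularFactor p ∧
      (∏ p ∈ oddPrimeFactors d, singularFactor p
          = ∏ p ∈ oddPrimeFactors (primorialK k), singularFactor p →
        oddPrimeFactors d = oddPrimeFactors (primorialK k)) := by
  have hq : 3 ≤ Nat.nth Nat.Prime k :=
    Nat.nth_prime_one_eq_three ▸ (Nat.nth_le_nth Nat.infinite_setOfPred_prime).2 hk
  refine prod_singularFactor_le_of_prod_lt hq (fun p hp hpP => ?_) (fun p hp => ?_)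
    (prod_oddPrimeFactors_lt hk he hd0 hlt)
  · rw [oddPrimeFactors, mem_filter] at hp hpP
    rw [mem_primeFactors_primorialK] at hpP
    by_contra hpq
    exact hpP ⟨⟨Nat.prime_of_mem_primeFactors hp.1, by omega⟩, hp.2⟩
  · rw [oddPrimeFactors, mem_filter, mem_primeFactors_primorialK] at hp
    exact ⟨hp.2, hp.1.2⟩

lemma primeFactors_eq_primeFactors_primorialK_iff (hk : 1 ≤ k) (hd0 : d ≠ 0)
    (hlt : d < primorialK (k + 1)) :
    d.primeFactors = (primorialK k).primeFactors ↔
      ∃ m : ℕ, 1 ≤ m ∧ m < Nat.nth Nat.Prime k ∧ d = m * primorialK k ∧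
        ∀ p ∈ m.primeFactors, p ≤ Nat.nth Nat.Prime (k - 1) := by
  rw [primeFactors_eq_iff_exists_mul (squarefree_primorialK k) hd0]
  refine exists_congr fun m => ?_
  have hsub : m.primeFactors ⊆ (primorialK k).primeFactors ↔
      ∀ p ∈ m.primeFactors, p ≤ Nat.nth Nat.Prime (k - 1) := by
    refine forall₂_congr fun p hp => ?_
    have hp' := Nat.prime_of_mem_primeFactors hp
    rw [mem_primeFactors_primorialK, ← lt_nth_prime_iff_le_nth_prime_pred hp' hk]
    exact and_iff_right hp'
  constructor
  · rintro ⟨hm, rfl, hmP⟩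
    rw [primorialK_succ, mul_comm (primorialK k)] at hlt
    exact ⟨by omega, Nat.lt_of_mul_lt_mul_right hlt, rfl, hsub.1 hmP⟩
  · rintro ⟨hm, -, hdm, hmP⟩
    exact ⟨by omega, hdm, hsub.2 hmP⟩

end

end S2Proof

open S2Proof in
theorem S2_le_S2_primorial (k : ℕ) (hk : 1 ≤ k) (d : ℕ) (he : Even d)
    (h2 : 2 ≤ d) (hlt : d < primorialK (k + 1)) :
    S2 d ≤ S2 (primorialK k) ∧
      (S2 d = S2 (primorialK k) ↔
        ∃ m : ℕ, 1 ≤ m ∧ m < Nat.nth Nat.Prime k ∧ d = m * primorialK k ∧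
          ∀ p ∈ m.primeFactors, p ≤ Nat.nth Nat.Prime (k - 1)) := by
  have hd0 : d ≠ 0 := by omega
  obtain ⟨hle, heq⟩ := prod_singularFactor_le_primorialK hk he hd0 hlt
  have hC : 0 < 2 * twinC := mul_pos two_pos twinC_pos
  rw [S2_eq_prod_singularFactor, S2_eq_prod_singularFactor, mul_le_mul_iff_right₀ hC,
    mul_right_inj' hC.ne', ← primeFactors_eq_primeFactors_primorialK_iff hk hd0 hlt,
    ← oddPrimeFactors_eq_iff he hd0 (even_primorialK hk) (primorialK_ne_zero k)]
  exact ⟨hle, heq, fun h => by rw [h]⟩
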